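/- In the PSPACE-hardness reduction from NFA universality to ∃-GFGness: if L(A) = Σ* then the constructed AFA B satisfies L(B) = ∅ and is trivially ∃-GFG; and if some word u is accepted by the dual automaton A̅, then Adam wins Eve's letter game on B by playing the letter a, then the letter that refutes Eve's guess of the second letter, and then u. -/

import Mathlib

namespace GFGPaper

/-- Positive Boolean formulas over `Q`. -/
inductive PosBool (Q : Type) : Type
  | atom : Q → PosBool Q
  | band : PosBool Q → PosBool Q → PosBool Q
  | bor  : PosBool Q → PosBool Q → PosBool Q

/-- A (positional) choice of Eve inside a positive Boolean formula:
she resolves every disjunction (possibly differently in different conjuncts). -/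
inductive EveChoice {Q : Type} : PosBool Q → Type
  | atom (q : Q) : EveChoice (PosBool.atom q)
  | band {φ ψ : PosBool Q} : EveChoice φ → EveChoice ψ → EveChoice (PosBool.band φ ψ)
  | borl {φ ψ : PosBool Q} : EveChoice φ → EveChoice (PosBool.bor φ ψ)
  | borr {φ ψ : PosBool Q} : EveChoice ψ → EveChoice (PosBool.bor φ ψ)

/-- The atoms that Adam (resolving conjunctions) can reach against Eve's choice. -/
def EveChoice.outcome {Q : Type} : {φ : PosBool Q} → EveChoice φ → Set Q
  | _, .atom q => {q}
  | _, .band c d => c.outcome ∪ d.outcome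
  | _, .borl c => c.outcome
  | _, .borr c => c.outcome

/-- A choice of Adam inside a positive Boolean formula: he resolves every conjunction. -/
inductive AdamChoice {Q : Type} : PosBool Q → Type
  | atom (q : Q) : AdamChoice (PosBool.atom q)
  | bandl {φ ψ : PosBool Q} : AdamChoice φ → AdamChoice (PosBool.band φ ψ)
  | bandr {φ ψ : PosBool Q} : AdamChoice ψ → AdamChoice (PosBool.band φ ψ)
  | bor {φ ψ : PosBool Q} : AdamChoice φ → AdamChoice ψ → AdamChoice (PosBool.bor φ ψ)

/-- The atoms Eve (resolving disjunctions) can reach against Adam's choice. -/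
def AdamChoice.outcome {Q : Type} : {φ : PosBool Q} → AdamChoice φ → Set Q
  | _, .atom q => {q}
  | _, .bandl c => c.outcome
  | _, .bandr c => c.outcome
  | _, .bor c d => c.outcome ∪ d.outcome

/-- The unique atom reached when Eve plays `e` and Adam plays `a` on the same formula. -/
def resolve {Q : Type} : {φ : PosBool Q} → EveChoice φ → AdamChoice φ → Q
  | _, .atom q, _ => q
  | _, .band c _, .bandl e => resolve c e
  | _, .band _ d, .bandr e => resolve d e
  | _, .borl c, .bor e _ => resolve c e
  | _, .borr c, .bor _ f => resolve c f

def InfOften (p : ℕ → Prop) : Prop := ∀ N, ∃ n, N ≤ n ∧ p n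

/-- The parity condition: the maximal priority occurring infinitely often is even. -/
def ParityAcc (c : ℕ → ℕ) : Prop :=
  ∃ p, Even p ∧ InfOften (fun n => c n = p) ∧ ∀ q, p < q → ¬ InfOften (fun n => c n = q)

/-- An alternating automaton with an abstract acceptance condition on
infinite sequences of transitions. -/
structure AltAut (A Q : Type) where
  init : Q
  δ : Q → A → PosBool Q
  acc : (ℕ → Q × A × Q) → Prop

def trace {A Q : Type} (w : ℕ → A) (ρ : ℕ → Q) : ℕ → Q × A × Q :=
  fun n => (ρ n, w n, ρ (n + 1))

/-- Acceptance via the model-checking game: Eve has a (history-dependent)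
strategy resolving the disjunctions such that every consistent path
(i.e. every way for Adam to resolve the conjunctions) is accepting. -/
def AltAut.Accepts {A Q : Type} (M : AltAut A Q) (w : ℕ → A) : Prop :=
  ∃ σ : List Q → (n : ℕ) → (q : Q) → EveChoice (M.δ q (w n)),
    ∀ ρ : ℕ → Q, ρ 0 = M.init →
      (∀ n, ρ (n + 1) ∈ (σ (List.ofFn fun i : Fin n => ρ i.val) n (ρ n)).outcome) →
      M.acc (trace w ρ)

/-- Eve wins her letter game: she resolves disjunctions online (knowing only the
play so far) so that whenever the word Adam produces is in the language,
the constructed path is accepting. -/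
def ExistsGFG {A Q : Type} (M : AltAut A Q) : Prop :=
  ∃ σ : List (A × Q) → (a : A) → (q : Q) → EveChoice (M.δ q a),
    ∀ (w : ℕ → A) (ρ : ℕ → Q), ρ 0 = M.init →
      (∀ n, ρ (n + 1) ∈
        (σ (List.ofFn fun i : Fin n => (w i.val, ρ (i.val + 1))) (w n) (ρ n)).outcome) →
      M.Accepts w → M.acc (trace w ρ)

/-- Adam wins his letter game: he resolves conjunctions online so that whenever the
word is not in the language, the constructed path is rejecting. -/
def ForallGFG {A Q : Type} (M : AltAut A Q) : Prop :=
  ∃ τ : List (A × Q) → (a : A) → (q : Q) → AdamChoice (M.δ q a),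
    ∀ (w : ℕ → A) (ρ : ℕ → Q), ρ 0 = M.init →
      (∀ n, ρ (n + 1) ∈
        (τ (List.ofFn fun i : Fin n => (w i.val, ρ (i.val + 1))) (w n) (ρ n)).outcome) →
      M.Accepts w ∨ ¬ M.acc (trace w ρ)

/-- Eve wins her letter game with a strategy that is positional in the expanded
letter game, i.e. depends only on the word read so far and the current state. -/
def EveWinsPositional {A Q : Type} (M : AltAut A Q) : Prop :=
  ∃ σ : List A → (a : A) → (q : Q) → EveChoice (M.δ q a),
    ∀ (w : ℕ → A) (ρ : ℕ → Q), ρ 0 = M.init →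
      (∀ n, ρ (n + 1) ∈ (σ (List.ofFn fun i : Fin n => w i.val) (w n) (ρ n)).outcome) →
      M.Accepts w → M.acc (trace w ρ)

/-- Alternating parity automaton (priorities on transitions). -/
structure APW (A Q : Type) where
  init : Q
  δ : Q → A → PosBool Q
  prio : Q → A → Q → ℕ

def APW.toAlt {A Q : Type} (M : APW A Q) : AltAut A Q :=
  { init := M.init, δ := M.δ,
    acc := fun t => ParityAcc fun n => M.prio (t n).1 (t n).2.1 (t n).2.2 }

def APW.Accepts {A Q : Type} (M : APW A Q) (w : ℕ → A) : Prop := M.toAlt.Accepts w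

def PosBool.dual {Q : Type} : PosBool Q → PosBool Q
  | .atom q => .atom q
  | .band φ ψ => .bor φ.dual ψ.dual
  | .bor φ ψ => .band φ.dual ψ.dual

/-- The dual automaton: swap ∧/∨ and increase all priorities by one. -/
def APW.dual {A Q : Type} (M : APW A Q) : APW A Q :=
  { init := M.init, δ := fun q a => (M.δ q a).dual,
    prio := fun q a q' => M.prio q a q' + 1 }

/-- The box of a positional Eve strategy on the one-step arena over `a`. -/
def stratBox {A Q : Type} (δ : Q → A → PosBool Q) (a : A)
    (σ : (q : Q) → EveChoice (δ q a)) : Set (Q × A × Q) :=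
  { t | t.2.1 = a ∧ t.2.2 ∈ (σ t.1).outcome }

def BoxesAt {A Q : Type} (δ : Q → A → PosBool Q) (a : A) : Set (Set (Q × A × Q)) :=
  Set.range (stratBox δ a)

def Boxes {A Q : Type} (δ : Q → A → PosBool Q) : Set (Set (Q × A × Q)) :=
  ⋃ a, BoxesAt δ a

/-- A sequence of boxes is universally accepting if every path through it is accepting. -/
def UnivAcc {A Q : Type} (M : AltAut A Q) (β : ℕ → Set (Q × A × Q)) : Prop :=
  ∀ (ρ : ℕ → Q) (wa : ℕ → A), ρ 0 = M.init →
    (∀ n, (ρ n, wa n, ρ (n + 1)) ∈ β n) →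
    M.acc (fun n => (ρ n, wa n, ρ (n + 1)))

/-- Deterministic parity automaton (priorities on transitions). -/
structure DPA (A P : Type) where
  init : P
  step : P → A → P
  prio : P → A → ℕ

def DPA.run {A P : Type} (D : DPA A P) (w : ℕ → A) : ℕ → P
  | 0 => D.init
  | n + 1 => D.step (DPA.run D w n) (w n)

def DPA.Accepts {A P : Type} (D : DPA A P) (w : ℕ → A) : Prop :=
  ParityAcc fun n => D.prio (D.run w n) (w n)

def pref {A : Type} (w : ℕ → A) (n : ℕ) : List A := List.ofFn fun i : Fin n => w i.val

/-- Nondeterministic parity automaton. -/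
structure NPA (A P : Type) where
  init : P
  Δ : P → A → Set P
  prio : P → A → P → ℕ

def NPA.IsRun {A P : Type} (N : NPA A P) (w : ℕ → A) (ρ : ℕ → P) : Prop :=
  ρ 0 = N.init ∧ ∀ n, ρ (n + 1) ∈ N.Δ (ρ n) (w n)

def NPA.Accepts {A P : Type} (N : NPA A P) (w : ℕ → A) : Prop :=
  ∃ ρ, N.IsRun w ρ ∧ ParityAcc fun n => N.prio (ρ n) (w n) (ρ (n + 1))

/-- A nondeterministic automaton is GFG if its nondeterminism can be resolved
based only on the prefix of the word read so far. -/
def NPA.GFG {A P : Type} (N : NPA A P) : Prop :=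
  ∃ f : List A → P, f [] = N.init ∧ (∀ u a, f (u ++ [a]) ∈ N.Δ (f u) a) ∧
    ∀ w : ℕ → A, N.Accepts w →
      ParityAcc fun n => N.prio (f (pref w n)) (w n) (f (pref w (n + 1)))

/-- Universal parity automaton. -/
structure UPA (A P : Type) where
  init : P
  Δ : P → A → Set P
  prio : P → A → P → ℕ

def UPA.IsRun {A P : Type} (N : UPA A P) (w : ℕ → A) (ρ : ℕ → P) : Prop :=
  ρ 0 = N.init ∧ ∀ n, ρ (n + 1) ∈ N.Δ (ρ n) (w n)

def UPA.Accepts {A P : Type} (N : UPA A P) (w : ℕ → A) : Prop :=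
  ∀ ρ, N.IsRun w ρ → ParityAcc fun n => N.prio (ρ n) (w n) (ρ (n + 1))

/-- A universal automaton is GFG if its universality can be resolved online:
on every word outside the language the produced run is rejecting. -/
def UPA.GFG {A P : Type} (N : UPA A P) : Prop :=
  ∃ f : List A → P, f [] = N.init ∧ (∀ u a, f (u ++ [a]) ∈ N.Δ (f u) a) ∧
    ∀ w : ℕ → A, ¬ N.Accepts w →
      ¬ ParityAcc fun n => N.prio (f (pref w n)) (w n) (f (pref w (n + 1)))

/-- A run of the box automaton `A^□` over `w` is a sequence of boxes. -/
def BoxRun {A Q : Type} (M : APW A Q) (w : ℕ → A) (β : ℕ → Set (Q × A × Q)) : Prop :=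
  ∀ n, β n ∈ BoxesAt M.δ (w n)

/-- Acceptance of the box automaton `A^□` built on a deterministic automaton `B`
over boxes: some box run is accepted by `B`. -/
def boxAccepts {A Q P : Type} (M : APW A Q) (B : DPA (Set (Q × A × Q)) P)
    (w : ℕ → A) : Prop :=
  ∃ β, BoxRun M w β ∧ B.Accepts β

/-- GFGness of the box automaton `A^□`: the box (its only nondeterminism) can be
chosen based only on the prefix of the word read. -/
def boxGFG {A Q P : Type} (M : APW A Q) (B : DPA (Set (Q × A × Q)) P) : Prop :=
  ∃ g : List A → A → Set (Q × A × Q),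
    (∀ u a, g u a ∈ BoxesAt M.δ a) ∧
    ∀ w : ℕ → A, boxAccepts M B w → B.Accepts (fun n => g (pref w n) (w n))

/-- A Rabin/Streett pair of sets of transitions. -/
structure RabinPair (T : Type) where
  bad : Set T
  good : Set T

def RabinAcc {T : Type} (pairs : Set (RabinPair T)) (t : ℕ → T) : Prop :=
  ∃ p ∈ pairs, (¬ InfOften fun n => t n ∈ p.bad) ∧ InfOften fun n => t n ∈ p.good

def StreettAcc {T : Type} (pairs : Set (RabinPair T)) (t : ℕ → T) : Prop :=
  ∀ p ∈ pairs, (¬ InfOften fun n => t n ∈ p.bad) ∨ InfOften fun n => t n ∈ p.good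

/-- Alternating Rabin automaton. -/
structure ARW (A Q : Type) where
  init : Q
  δ : Q → A → PosBool Q
  pairs : Set (RabinPair (Q × A × Q))

def ARW.toAlt {A Q : Type} (M : ARW A Q) : AltAut A Q :=
  { init := M.init, δ := M.δ, acc := RabinAcc M.pairs }

/-- Alternating Streett automaton. -/
structure ASW (A Q : Type) where
  init : Q
  δ : Q → A → PosBool Q
  pairs : Set (RabinPair (Q × A × Q))

def ASW.toAlt {A Q : Type} (M : ASW A Q) : AltAut A Q :=
  { init := M.init, δ := M.δ, acc := StreettAcc M.pairs }

end GFGPaper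

namespace GFGPaper

def PosBool.eval {Q : Type} (v : Q → Prop) : PosBool Q → Prop
  | .atom q => v q
  | .band φ ψ => φ.eval v ∧ ψ.eval v
  | .bor φ ψ => φ.eval v ∨ ψ.eval v

/-- Alternating automaton on finite words. -/
structure AFA (A Q : Type) where
  init : Q
  δ : Q → A → PosBool Q
  final : Set Q

def AFA.acceptsFrom {A Q : Type} (M : AFA A Q) : Q → List A → Prop
  | q, [] => q ∈ M.final
  | q, a :: u => (M.δ q a).eval (fun q' => M.acceptsFrom q' u)

def AFA.Accepts {A Q : Type} (M : AFA A Q) (u : List A) : Prop :=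
  M.acceptsFrom M.init u

/-- Eve wins her letter game on an AFA: she resolves disjunctions online so
that at every moment Adam may stop, if the word played so far is in the
language then the state reached is accepting. -/
def EGFGfin {A Q : Type} (M : AFA A Q) : Prop :=
  ∃ σ : List (A × Q) → (a : A) → (q : Q) → EveChoice (M.δ q a),
    ∀ (w : ℕ → A) (ρ : ℕ → Q), ρ 0 = M.init →
      (∀ n, ρ (n + 1) ∈
        (σ (List.ofFn fun i : Fin n => (w i.val, ρ (i.val + 1))) (w n) (ρ n)).outcome) →
      ∀ n, M.Accepts (pref w n) → ρ n ∈ M.final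

/-- Nondeterministic automaton on finite words. -/
structure NFAf (A Q : Type) where
  start : Finset Q
  step : Q → A → Finset Q
  accept : Finset Q

def NFAf.acceptsFrom {A Q : Type} (N : NFAf A Q) : Q → List A → Prop
  | q, [] => q ∈ N.accept
  | q, a :: u => ∃ q' ∈ N.step q a, N.acceptsFrom q' u

def NFAf.Lang {A Q : Type} (N : NFAf A Q) (u : List A) : Prop :=
  ∃ q ∈ N.start, N.acceptsFrom q u

end GFGPaper

namespace GFGPaper

/-- Conjunction of a list of atoms (with a default for the empty list). -/
def conjList {Q : Type} (dflt : Q) : List Q → PosBool Q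
  | [] => .atom dflt
  | [q] => .atom q
  | q :: r :: l => .band (.atom q) (conjList dflt (r :: l))

/-- States of the AFA `B` of the reduction: the initial state, Eve's two guess
states, a rejecting sink, an accepting sink (for empty conjunctions), and the
states of the dual universal automaton `A̅`. -/
inductive BSt (Q : Type) : Type
  | start : BSt Q
  | guess : Bool → BSt Q
  | sink : BSt Q
  | top : BSt Q
  | st : Q → BSt Q

/-- The AFA `B` built from an NFA `N` over `Σ = {a, b} = Bool`: Eve guesses the
second letter; a wrong guess leads to the rejecting sink `⊥`, a right guess
leads to (the initial configuration of) the dual universal automaton `A̅`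
recognising the complement of `L(N)`. So `L(B) = Σ·Σ·L(A̅)`. -/
noncomputable def reductionAFA {Q : Type} (N : NFAf Bool Q) : AFA Bool (BSt Q) where
  init := .start
  δ := fun p x =>
    match p with
    | .start => .bor (.atom (.guess false)) (.atom (.guess true))
    | .guess c => if x = c then conjList .top (N.start.toList.map BSt.st)
                  else .atom .sink
    | .sink => .atom .sink
    | .top => .atom .top
    | .st q => conjList .top ((N.step q x).toList.map BSt.st)
  final := { p | p = .top ∨ ∃ q, p = .st q ∧ q ∉ N.accept }

def curState {A Q : Type} (init : Q) (h : List (A × Q)) : Q :=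
  (h.getLast?).elim init Prod.snd

/-- The play of Eve's letter game on an AFA induced by an Adam strategy
(`nl` choosing the next letter and `ac` resolving conjunctions, possibly
depending on Eve's choice) against an Eve strategy `σ`. -/
noncomputable def playHist {A Q : Type} (M : AFA A Q)
    (nl : List (A × Q) → A)
    (ac : (h : List (A × Q)) → (q : Q) →
      EveChoice (M.δ q (nl h)) → AdamChoice (M.δ q (nl h)))
    (σ : (h : List (A × Q)) → (a : A) → (q : Q) → EveChoice (M.δ q a)) :
    ℕ → List (A × Q)
  | 0 => []
  | n + 1 =>
    let h := playHist M nl ac σ n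
    let q := curState M.init h
    let e := σ h (nl h) q
    h ++ [(nl h, resolve e (ac h q e))]

/-- Adam wins Eve's letter game on an AFA: he has a strategy (letters and
conjunction resolutions) such that against every Eve strategy, at some moment
the word played is in the language while the state reached is rejecting. -/
def AdamWinsEveGameFin {A Q : Type} (M : AFA A Q) : Prop :=
  ∃ (nl : List (A × Q) → A)
    (ac : (h : List (A × Q)) → (q : Q) →
      EveChoice (M.δ q (nl h)) → AdamChoice (M.δ q (nl h))),
    ∀ σ : (h : List (A × Q)) → (a : A) → (q : Q) → EveChoice (M.δ q a),
      ∃ n, M.Accepts ((playHist M nl ac σ n).map Prod.fst) ∧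
        curState M.init (playHist M nl ac σ n) ∉ M.final

/-! ### Auxiliary material for the proof -/

def defaultEve {Q : Type} : (φ : PosBool Q) → EveChoice φ
  | .atom q => .atom q
  | .band φ ψ => .band (defaultEve φ) (defaultEve ψ)
  | .bor φ _ => .borl (defaultEve φ)

def defaultAdam {Q : Type} : (φ : PosBool Q) → AdamChoice φ
  | .atom q => .atom q
  | .band φ _ => .bandl (defaultAdam φ)
  | .bor φ ψ => .bor (defaultAdam φ) (defaultAdam ψ)

lemma resolve_mem_adam {Q : Type} : ∀ {φ : PosBool Q} (e : EveChoice φ) (a : AdamChoice φ),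
    resolve e a ∈ a.outcome := by
  intro φ e
  induction e with
  | atom q => intro a; cases a; simp [resolve, AdamChoice.outcome]
  | band c d ihc ihd =>
    intro a
    cases a with
    | bandl a => simpa [resolve, AdamChoice.outcome] using ihc a
    | bandr a => simpa [resolve, AdamChoice.outcome] using ihd a
  | borl c ih =>
    intro a
    cases a with
    | bor a b =>
      simp only [resolve, AdamChoice.outcome, Set.mem_union]
      exact Or.inl (ih a)
  | borr c ih =>
    intro a
    cases a with
    | bor a b =>
      simp only [resolve, AdamChoice.outcome, Set.mem_union]
      exact Or.inr (ih b)

lemma resolve_of_atom {Q : Type} {φ : PosBool Q} {p : Q} (h : φ = .atom p)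
    (e : EveChoice φ) (a : AdamChoice φ) : resolve e a = p := by
  subst h; cases e; cases a; rfl

lemma resolve_of_bor_atoms {Q : Type} {φ : PosBool Q} {p r : Q}
    (h : φ = .bor (.atom p) (.atom r)) (e : EveChoice φ) (a : AdamChoice φ) :
    resolve e a = p ∨ resolve e a = r := by
  subst h
  have := resolve_mem_adam e a
  cases a with
  | bor a b =>
    cases a; cases b
    simp only [AdamChoice.outcome, Set.mem_union, Set.mem_singleton_iff] at this
    tauto

lemma map_getD_range {α : Type} (d : α) : ∀ l : List α,
    (List.range l.length).map (fun i => l.getD i d) = l := by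
  intro l
  induction l with
  | nil => simp
  | cons a t ih =>
    simp only [List.length_cons, List.range_succ_eq_map, List.map_cons, List.map_map]
    simp only [Function.comp_def, List.getD_cons_zero, List.getD_cons_succ]
    rw [ih]

section Red
variable {Q : Type} (N : NFAf Bool Q)

lemma top_accepts : ∀ v : List Bool, (reductionAFA N).acceptsFrom .top v := by
  intro v
  induction v with
  | nil => simp [AFA.acceptsFrom, reductionAFA]
  | cons x v ih => simpa [AFA.acceptsFrom, reductionAFA, PosBool.eval] using ih

lemma sink_not_accepts : ∀ v : List Bool, ¬ (reductionAFA N).acceptsFrom .sink v := by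
  intro v
  induction v with
  | nil => simp [AFA.acceptsFrom, reductionAFA]
  | cons x v ih => simpa [AFA.acceptsFrom, reductionAFA, PosBool.eval] using ih

lemma conjList_eval {Q' : Type} (v : Q' → Prop) (dflt : Q') (hd : v dflt) :
    ∀ l : List Q', (conjList dflt l).eval v ↔ ∀ q ∈ l, v q := by
  intro l
  induction l with
  | nil => simpa [conjList, PosBool.eval] using hd
  | cons q t ih =>
    cases t with
    | nil => simp [conjList, PosBool.eval]
    | cons r s => simp [conjList, PosBool.eval] at ih ⊢; tauto

lemma st_dual : ∀ (v : List Bool) (q : Q),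
    ((reductionAFA N).acceptsFrom (.st q) v ↔ ¬ N.acceptsFrom q v) := by
  intro v
  induction v with
  | nil =>
    intro q
    simp [AFA.acceptsFrom, NFAf.acceptsFrom, reductionAFA]
  | cons x v ih =>
    intro q
    show ((conjList .top (((N.step q x).toList).map .st)).eval
        (fun p => (reductionAFA N).acceptsFrom p v)) ↔ _
    rw [conjList_eval (fun p => (reductionAFA N).acceptsFrom p v) BSt.top (top_accepts N v)]
    simp only [List.mem_map, Finset.mem_toList, NFAf.acceptsFrom]
    push_neg
    constructor
    · intro h q' hq'
      exact (ih q').mp (h (.st q') ⟨q', hq', rfl⟩)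
    · rintro h p ⟨q', hq', rfl⟩
      exact (ih q').mpr (h q' hq')

lemma accepts_iff : ∀ x y : Bool, ∀ v : List Bool,
    ((reductionAFA N).Accepts (x :: y :: v) ↔ ¬ N.Lang v) := by
  intro x y v
  have hguess : ∀ c : Bool, ((reductionAFA N).acceptsFrom (.guess c) (y :: v) ↔
      (y = c ∧ ¬ N.Lang v)) := by
    intro c
    show ((if y = c then conjList BSt.top (N.start.toList.map BSt.st)
        else PosBool.atom .sink).eval (fun p => (reductionAFA N).acceptsFrom p v)) ↔ _
    by_cases h : y = c
    · rw [if_pos h, conjList_eval (fun p => (reductionAFA N).acceptsFrom p v) BSt.top (top_accepts N v)]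
      simp only [List.mem_map, Finset.mem_toList, NFAf.Lang, h, true_and]
      push_neg
      constructor
      · intro hall q hq
        exact (st_dual N v q).mp (hall (.st q) ⟨q, hq, rfl⟩)
      · rintro hall p ⟨q, hq, rfl⟩
        exact (st_dual N v q).mpr (hall q hq)
    · rw [if_neg h]
      simp only [PosBool.eval]
      exact iff_of_false (sink_not_accepts N v) (fun hy => h hy.1)
  show ((reductionAFA N).acceptsFrom (.guess false) (y :: v) ∨
      (reductionAFA N).acceptsFrom (.guess true) (y :: v)) ↔ _
  rw [hguess false, hguess true]
  cases y <;> simp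

lemma accepts_empty (hall : ∀ u, N.Lang u) : ∀ u, ¬ (reductionAFA N).Accepts u := by
  intro u
  match u with
  | [] => simp [AFA.Accepts, AFA.acceptsFrom, reductionAFA]
  | [x] => simp [AFA.Accepts, AFA.acceptsFrom, reductionAFA, PosBool.eval]
  | x :: y :: v =>
    rw [accepts_iff]
    simpa using hall v

end Red
lemma playHist_zero {A Q : Type} (M : AFA A Q) (nl) (ac) (σ) :
    playHist M nl ac σ 0 = ([] : List (A × Q)) := rfl

lemma playHist_succ {A Q : Type} (M : AFA A Q) (nl) (ac)
    (σ : (h : List (A × Q)) → (a : A) → (q : Q) → EveChoice (M.δ q a)) (n : ℕ) :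
    playHist M nl ac σ (n + 1) =
      playHist M nl ac σ n ++
        [(nl (playHist M nl ac σ n),
          resolve
            (σ (playHist M nl ac σ n) (nl (playHist M nl ac σ n))
              (curState M.init (playHist M nl ac σ n)))
            (ac (playHist M nl ac σ n) (curState M.init (playHist M nl ac σ n))
              (σ (playHist M nl ac σ n) (nl (playHist M nl ac σ n))
                (curState M.init (playHist M nl ac σ n)))))] := rfl

lemma curState_concat {A Q : Type} (init : Q) (h : List (A × Q)) (x : A × Q) :
    curState init (h ++ [x]) = x.2 := by
  simp [curState, List.getLast?_concat]

/-- Adam's letter strategy in the reduction. -/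
def adamLetters {Q : Type} (u : List Bool) : List (Bool × BSt Q) → Bool := fun h =>
  if h.length = 0 then true
  else if h.length = 1 then
    (match curState BSt.start h with
     | BSt.guess c => !c
     | _ => true)
  else u.getD (h.length - 2) true

/-- Adam's conjunction-resolving strategy in the reduction. -/
noncomputable def adamAC {Q : Type} (N : NFAf Bool Q) (u : List Bool) :
    (h : List (Bool × BSt Q)) → (q : BSt Q) →
      EveChoice ((reductionAFA N).δ q (adamLetters u h)) →
      AdamChoice ((reductionAFA N).δ q (adamLetters u h)) :=
  fun _ _ _ => defaultAdam _

lemma adam_wins {Q : Type} (N : NFAf Bool Q) (u : List Bool) (hu : ¬ N.Lang u) :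
    AdamWinsEveGameFin (reductionAFA N) := by
  refine ⟨adamLetters u, adamAC N u, ?_⟩
  intro σ
  set H := playHist (reductionAFA N) (adamLetters u) (adamAC N u) σ with hH
  -- the first step
  have h0 : H 0 = [] := rfl
  have hlet0 : adamLetters (Q := Q) u (H 0) = true := by rw [h0]; rfl
  have hcur0 : curState (reductionAFA N).init (H 0) = BSt.start := by rw [h0]; rfl
  have hform0 : (reductionAFA N).δ (curState (reductionAFA N).init (H 0))
      (adamLetters u (H 0)) =
      .bor (.atom (.guess false)) (.atom (.guess true)) := by
    rw [hcur0, hlet0]; rfl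
  obtain ⟨c, hc⟩ : ∃ c : Bool,
      resolve (σ (H 0) (adamLetters u (H 0)) (curState (reductionAFA N).init (H 0)))
        (adamAC N u (H 0) (curState (reductionAFA N).init (H 0))
          (σ (H 0) (adamLetters u (H 0)) (curState (reductionAFA N).init (H 0)))) =
        BSt.guess c := by
    rcases resolve_of_bor_atoms hform0
      (σ (H 0) (adamLetters u (H 0)) (curState (reductionAFA N).init (H 0)))
      (adamAC N u (H 0) (curState (reductionAFA N).init (H 0))
        (σ (H 0) (adamLetters u (H 0)) (curState (reductionAFA N).init (H 0))))
      with h | h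
    · exact ⟨false, h⟩
    · exact ⟨true, h⟩
  have h1 : H 1 = [(true, BSt.guess c)] := by
    rw [hH, playHist_succ, ← hH, hc, hlet0, h0]
    rfl
  -- the second step
  have hlet1 : adamLetters (Q := Q) u (H 1) = !c := by
    rw [h1]; simp [adamLetters, curState]
  have hcur1 : curState (reductionAFA N).init (H 1) = BSt.guess c := by
    rw [h1]; simp [curState, reductionAFA]
  have hform1 : (reductionAFA N).δ (curState (reductionAFA N).init (H 1))
      (adamLetters u (H 1)) = .atom .sink := by
    rw [hcur1, hlet1]
    simp [reductionAFA]
  -- the invariant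
  have key : ∀ n : ℕ,
      H (n + 2) = (true, BSt.guess c) :: (!c, BSt.sink) ::
          (List.range n).map (fun i => (u.getD i true, BSt.sink)) ∧
        curState (reductionAFA N).init (H (n + 2)) = BSt.sink := by
    intro n
    induction n with
    | zero =>
      have h2 : H 2 = H 1 ++ [(!c, BSt.sink)] := by
        rw [hH, playHist_succ, ← hH, resolve_of_atom hform1, hlet1]
      constructor
      · rw [h2, h1]; rfl
      · rw [h2, curState_concat]
    | succ n ih =>
      have hlenn : (H (n + 2)).length = n + 2 := by
        rw [ih.1]; simp
      have hletn : adamLetters (Q := Q) u (H (n + 2)) = u.getD n true := by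
        simp [adamLetters, hlenn]
      have hformn : (reductionAFA N).δ (curState (reductionAFA N).init (H (n + 2)))
          (adamLetters u (H (n + 2))) = .atom .sink := by
        rw [ih.2]
        rfl
      have hstep : H (n + 3) = H (n + 2) ++ [(u.getD n true, BSt.sink)] := by
        rw [hH, playHist_succ, ← hH, resolve_of_atom hformn, hletn]
      constructor
      · rw [hstep, ih.1, List.range_succ]
        simp
      · rw [hstep, curState_concat]
  refine ⟨u.length + 2, ?_, ?_⟩
  · rw [(key u.length).1]
    have : (List.map Prod.fst
        ((List.range u.length).map (fun i => (u.getD i true, BSt.sink (Q := Q))))) = u := by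
      rw [List.map_map]
      simpa [Function.comp_def] using map_getD_range true u
    simp only [List.map_cons, this]
    rw [accepts_iff]
    exact hu
  · rw [(key u.length).2]
    simp [reductionAFA, AFA.final]

/-- in the reduction from NFA universality to ∃-GFGness: if
`L(N) = Σ*` then the constructed AFA `B` has empty language and is (trivially)
∃-GFG; and if some word `u` is accepted by the dual automaton `A̅` (i.e.
`u ∉ L(N)`), then Adam wins Eve's letter game on `B`. -/
theorem reduction_correctness {Q : Type} (N : NFAf Bool Q) :
    ((∀ u, N.Lang u) →
      (∀ u, ¬ (reductionAFA N).Accepts u) ∧ EGFGfin (reductionAFA N)) ∧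
    (∀ u : List Bool, ¬ N.Lang u → AdamWinsEveGameFin (reductionAFA N)) := by
  constructor
  · intro hall
    refine ⟨accepts_empty N hall, ?_⟩
    refine ⟨fun _ a q => defaultEve _, ?_⟩
    intro w ρ _ _ n hacc
    exact absurd hacc (accepts_empty N hall _)
  · intro u hu
    exact adam_wins N u hu

end GFGPaper
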